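/- arXiv:0907.4093 — 3 statements merged into one kernel-verified Lean document; each statement's English description precedes it below -/
import Mathlib

section
/- Let f, g : ℝ → ℝ with f - g antitone on a set I ⊆ ℝ. Then for any a₁ in the argmax set of f on I and any a₀ in the argmax set of g on I, if f - g is strictly antitone, then a₁ ≤ a₀. -/
/-- If `a₁` maximizes `f` on `I`, `a₀` maximizes `g` on `I`, and `f - g` is
strictly antitone on `I`, then `a₁ ≤ a₀`. -/
theorem stmt_1 (I : Set ℝ) (f g : ℝ → ℝ) (a₁ a₀ : ℝ)
    (ha₁ : a₁ ∈ I) (ha₀ : a₀ ∈ I)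
    (hmax₁ : ∀ a ∈ I, f a ≤ f a₁)
    (hmax₀ : ∀ a ∈ I, g a ≤ g a₀)
    (hanti : ∀ a ∈ I, ∀ b ∈ I, a < b → f b - g b < f a - g a) :
    a₁ ≤ a₀ := by
  by_contra h
  push_neg at h
  have := hanti a₀ ha₀ a₁ ha₁ h
  have h1 := hmax₁ a₀ ha₀
  have h2 := hmax₀ a₁ ha₁
  linarith
end

section
/- Let X be a finite type and U : B × X → ℝ. Suppose the sets of achievable payoff functions Λ(a₁) := {U(a₁,b,·) : b ∈ B₁} and Λ(a₀) := {U(a₀,b,·) : b ∈ B₀} over action sets B₁, B₀ satisfy: the downward closures satisfy Λ⁻(a₁) = Λ⁻(a₀) + K for some set K of functions X → ℝ (Minkowski sum, where Λ⁻ denotes the set of functions pointwise dominated by some element of Λ). Then for every probability vector ρ on X, J(a₁,ρ) - J(a₀,ρ) = σ_K(ρ), where J(a,ρ) = sup over the corresponding action set of the ρ-expectation of payoff, and σ_K(ρ) = sup_{k ∈ K} ∑_x k(x)ρ(x). In particular ρ ↦ J(a₁,ρ) - J(a₀,ρ) is convex on the probability simplex. -/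
open Pointwise

/-- Downward closure of a set of payoff functions. -/
def lowerClosure' {X : Type*} (S : Set (X → ℝ)) : Set (X → ℝ) :=
  {f | ∃ g ∈ S, ∀ x, f x ≤ g x}

section aux

variable {X : Type*} [Fintype X]

private lemma exp_mono {ρ : X → ℝ} (hρ : ∀ x, 0 ≤ ρ x) {f g : X → ℝ}
    (h : ∀ x, f x ≤ g x) : ∑ x, f x * ρ x ≤ ∑ x, g x * ρ x :=
  Finset.sum_le_sum fun x _ => mul_le_mul_of_nonneg_right (h x) (hρ x)

private lemma bdd_lower {ρ : X → ℝ} (hρ : ∀ x, 0 ≤ ρ x) {S : Set (X → ℝ)}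
    (h : BddAbove ((fun f : X → ℝ => ∑ x, f x * ρ x) '' S)) :
    BddAbove ((fun f : X → ℝ => ∑ x, f x * ρ x) '' lowerClosure' S) := by
  obtain ⟨u, hu⟩ := h
  refine ⟨u, ?_⟩
  rintro _ ⟨f, ⟨g, hg, hfg⟩, rfl⟩
  exact le_trans (exp_mono hρ hfg) (hu ⟨g, hg, rfl⟩)

private lemma sSup_lower {ρ : X → ℝ} (hρ : ∀ x, 0 ≤ ρ x) (S : Set (X → ℝ)) :
    sSup ((fun f : X → ℝ => ∑ x, f x * ρ x) '' lowerClosure' S)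
      = sSup ((fun f : X → ℝ => ∑ x, f x * ρ x) '' S) := by
  apply csSup_eq_csSup_of_forall_exists_le
  · rintro _ ⟨f, ⟨g, hg, hfg⟩, rfl⟩
    exact ⟨_, ⟨g, hg, rfl⟩, exp_mono hρ hfg⟩
  · rintro _ ⟨g, hg, rfl⟩
    exact ⟨_, ⟨g, ⟨g, hg, fun x => le_rfl⟩, rfl⟩, le_rfl⟩

private lemma image_minkowski (ρ : X → ℝ) (A B : Set (X → ℝ)) :
    (fun f : X → ℝ => ∑ x, f x * ρ x) '' (A + B)
      = (fun f : X → ℝ => ∑ x, f x * ρ x) '' A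
        + (fun f : X → ℝ => ∑ x, f x * ρ x) '' B := by
  ext y
  constructor
  · rintro ⟨f, hf, rfl⟩
    rw [Set.mem_add] at hf
    obtain ⟨a, ha, k, hk, rfl⟩ := hf
    exact ⟨_, ⟨a, ha, rfl⟩, _, ⟨k, hk, rfl⟩,
      by simp [← Finset.sum_add_distrib, add_mul]⟩
  · rintro ⟨_, ⟨a, ha, rfl⟩, _, ⟨k, hk, rfl⟩, rfl⟩
    exact ⟨a + k, Set.add_mem_add ha hk,
      by simp [← Finset.sum_add_distrib, add_mul]⟩

end aux

/-- If the downward closures of the achievable payoff sets satisfy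
`Λ⁻(a₁) = Λ⁻(a₀) + K`, then for every probability vector `ρ` the difference of
Epstein functionals equals the support function of `K` at `ρ`; in particular it
is convex in `ρ`. -/
theorem stmt_6 {X : Type*} [Fintype X] {B₀ B₁ : Type*} [Nonempty B₀] [Nonempty B₁]
    (U₁ : B₁ → X → ℝ) (U₀ : B₀ → X → ℝ) (K : Set (X → ℝ)) (hK : K.Nonempty)
    (hMink : lowerClosure' (Set.range U₁) = lowerClosure' (Set.range U₀) + K)
    (hbdd₁ : ∀ ρ : X → ℝ, (∀ x, 0 ≤ ρ x) →
      BddAbove (Set.range fun b : B₁ => ∑ x, U₁ b x * ρ x))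
    (hbdd₀ : ∀ ρ : X → ℝ, (∀ x, 0 ≤ ρ x) →
      BddAbove (Set.range fun b : B₀ => ∑ x, U₀ b x * ρ x))
    (hbddK : ∀ ρ : X → ℝ, (∀ x, 0 ≤ ρ x) →
      BddAbove ((fun k : X → ℝ => ∑ x, k x * ρ x) '' K)) :
    (∀ ρ : X → ℝ, (∀ x, 0 ≤ ρ x) → ∑ x, ρ x = 1 →
      (⨆ b, ∑ x, U₁ b x * ρ x) - (⨆ b, ∑ x, U₀ b x * ρ x)
        = sSup ((fun k : X → ℝ => ∑ x, k x * ρ x) '' K))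
    ∧
    (∀ ρ₀ ρ₁ : X → ℝ, (∀ x, 0 ≤ ρ₀ x) → (∀ x, 0 ≤ ρ₁ x) →
      ∑ x, ρ₀ x = 1 → ∑ x, ρ₁ x = 1 →
      ∀ t : ℝ, 0 ≤ t → t ≤ 1 →
        ((⨆ b, ∑ x, U₁ b x * (t * ρ₁ x + (1 - t) * ρ₀ x))
            - ⨆ b, ∑ x, U₀ b x * (t * ρ₁ x + (1 - t) * ρ₀ x))
          ≤ t * ((⨆ b, ∑ x, U₁ b x * ρ₁ x) - ⨆ b, ∑ x, U₀ b x * ρ₁ x)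
            + (1 - t) * ((⨆ b, ∑ x, U₁ b x * ρ₀ x) - ⨆ b, ∑ x, U₀ b x * ρ₀ x)) := by
  -- main identity for any nonnegative ρ (no need for normalization)
  have main : ∀ ρ : X → ℝ, (∀ x, 0 ≤ ρ x) →
      (⨆ b, ∑ x, U₁ b x * ρ x) - (⨆ b, ∑ x, U₀ b x * ρ x)
        = sSup ((fun k : X → ℝ => ∑ x, k x * ρ x) '' K) := by
    intro ρ hρ
    set E : (X → ℝ) → ℝ := fun f => ∑ x, f x * ρ x with hE
    have hr₁ : Set.range (fun b : B₁ => ∑ x, U₁ b x * ρ x) = E '' Set.range U₁ := by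
      rw [← Set.range_comp]; rfl
    have hr₀ : Set.range (fun b : B₀ => ∑ x, U₀ b x * ρ x) = E '' Set.range U₀ := by
      rw [← Set.range_comp]; rfl
    have hA0ne : (E '' lowerClosure' (Set.range U₀)).Nonempty := by
      obtain ⟨b⟩ := ‹Nonempty B₀›
      exact ⟨E (U₀ b), ⟨U₀ b, ⟨U₀ b, ⟨b, rfl⟩, fun x => le_rfl⟩, rfl⟩⟩
    have hA0bdd : BddAbove (E '' lowerClosure' (Set.range U₀)) :=
      bdd_lower hρ (hr₀ ▸ hbdd₀ ρ hρ)
    have hKne : (E '' K).Nonempty := hK.image E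
    have key : (⨆ b, ∑ x, U₁ b x * ρ x)
        = (⨆ b, ∑ x, U₀ b x * ρ x) + sSup (E '' K) := by
      have h1 : (⨆ b, ∑ x, U₁ b x * ρ x) = sSup (E '' Set.range U₁) := by
        rw [iSup, hr₁]
      have h0 : (⨆ b, ∑ x, U₀ b x * ρ x) = sSup (E '' Set.range U₀) := by
        rw [iSup, hr₀]
      rw [h1, h0, ← sSup_lower hρ (Set.range U₁), hMink,
        image_minkowski ρ _ K,
        csSup_add hA0ne hA0bdd hKne (hbddK ρ hρ), sSup_lower hρ (Set.range U₀)]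
    rw [key]; ring
  refine ⟨fun ρ hρ _ => main ρ hρ, ?_⟩
  intro ρ₀ ρ₁ h₀ h₁ _ _ t ht ht1
  have h1t : 0 ≤ 1 - t := by linarith
  set ρt : X → ℝ := fun x => t * ρ₁ x + (1 - t) * ρ₀ x with hρt
  have hρtpos : ∀ x, 0 ≤ ρt x := fun x =>
    add_nonneg (mul_nonneg ht (h₁ x)) (mul_nonneg h1t (h₀ x))
  rw [main ρt hρtpos, main ρ₀ h₀, main ρ₁ h₁]
  -- convexity of the support function
  apply csSup_le (hK.image _)
  rintro _ ⟨k, hk, rfl⟩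
  have e : ∑ x, k x * ρt x
      = t * (∑ x, k x * ρ₁ x) + (1 - t) * (∑ x, k x * ρ₀ x) := by
    simp only [hρt, Finset.mul_sum, ← Finset.sum_add_distrib]
    congr 1; ext x; ring
  simp only []
  show ∑ x, k x * ρt x ≤ _
  rw [e]
  have l₁ : (∑ x, k x * ρ₁ x) ≤ sSup ((fun k : X → ℝ => ∑ x, k x * ρ₁ x) '' K) :=
    le_csSup (hbddK ρ₁ h₁) ⟨k, hk, rfl⟩
  have l₀ : (∑ x, k x * ρ₀ x) ≤ sSup ((fun k : X → ℝ => ∑ x, k x * ρ₀ x) '' K) :=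
    le_csSup (hbddK ρ₀ h₀) ⟨k, hk, rfl⟩
  exact add_le_add (mul_le_mul_of_nonneg_left l₁ ht) (mul_le_mul_of_nonneg_left l₀ h1t)
end

section
/- Suppose for utility functions U₁ : B₁ → X → ℝ and U₀ : B₀ → X → ℝ there exists a map φ : B₀ → B₁ and an element b* ∈ B₀ such that b* minimizes b ↦ U₁(φ(b), x) - U₀(b, x) over B₀ simultaneously for every x ∈ X, and moreover every b₁ ∈ B₁ equals φ(b₀) for some such pair (φ, b₀). Then Λ⁻₁ = Λ⁻₀ + K, where Λ⁻ᵢ is the downward closure of the achievable payoff set {Uᵢ(b,·) : b ∈ Bᵢ} and K is the union over admissible φ of {x ↦ U₁(φ(b), x) - U₀(b, x) : b a simultaneous minimizer for φ}. -/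
open Pointwise

/-- Geometric characterization from simultaneous minimizers: if every `b₁ ∈ B₁`
arises as `φ b₀` for some map `φ : B₀ → B₁` admitting a minimizer of
`b ↦ U₁ (φ b) x - U₀ b x` that is simultaneous in `x`, then the downward
closure of the payoffs of `U₁` is the Minkowski sum of the downward closure of
the payoffs of `U₀` with the set `K` of attained minimal differences. -/
theorem stmt_8 {X : Type*} {B₀ B₁ : Type*} [Nonempty B₀] [Nonempty B₁]
    (U₀ : B₀ → X → ℝ) (U₁ : B₁ → X → ℝ)
    (Φ : Set (B₀ → B₁))
    (hΦ : Φ = {φ | ∃ b : B₀, ∀ x : X, ∀ b' : B₀,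
      U₁ (φ b) x - U₀ b x ≤ U₁ (φ b') x - U₀ b' x})
    (hΦne : Φ.Nonempty)
    (hsurj : ∀ b₁ : B₁, ∃ φ ∈ Φ, ∃ b₀ : B₀,
      (∀ x : X, ∀ b' : B₀, U₁ (φ b₀) x - U₀ b₀ x ≤ U₁ (φ b') x - U₀ b' x)
      ∧ φ b₀ = b₁)
    (K : Set (X → ℝ))
    (hK : K = ⋃ φ ∈ Φ, {f | ∃ b₀ : B₀,
      (∀ x : X, ∀ b' : B₀, U₁ (φ b₀) x - U₀ b₀ x ≤ U₁ (φ b') x - U₀ b' x)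
      ∧ f = fun x => U₁ (φ b₀) x - U₀ b₀ x}) :
    {f : X → ℝ | ∃ b : B₁, ∀ x, f x ≤ U₁ b x}
      = {f : X → ℝ | ∃ b : B₀, ∀ x, f x ≤ U₀ b x} + K := by
  ext f
  simp only [Set.mem_setOf_eq, Set.mem_add]
  constructor
  · rintro ⟨b₁, hf⟩
    obtain ⟨φ, hφ, b₀, hmin, hb⟩ := hsurj b₁
    refine ⟨fun x => f x - (U₁ (φ b₀) x - U₀ b₀ x), ⟨b₀, fun x => ?_⟩,
      fun x => U₁ (φ b₀) x - U₀ b₀ x, ?_, by funext x; simp [Pi.add_apply]⟩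
    · have := hf x; rw [hb]; dsimp only; linarith
    · rw [hK]
      exact Set.mem_biUnion hφ ⟨b₀, hmin, rfl⟩
  · rintro ⟨g, ⟨b', hg⟩, k, hk, rfl⟩
    rw [hK] at hk
    simp only [Set.mem_iUnion, Set.mem_setOf_eq] at hk
    obtain ⟨φ, hφ, b₀, hmin, rfl⟩ := hk
    refine ⟨φ b', fun x => ?_⟩
    have := hmin x b'
    have := hg x
    simp only [Pi.add_apply]
    linarith
end
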